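/- A complete binary tree of height h, and every subdivision of it, has pathwidth at least ⌈h/2⌉. -/

import Mathlib

open SimpleGraph

/-- A tree decomposition of a graph `G`. -/
structure TreeDecomp {V : Type} (G : SimpleGraph V) where
  ι : Type
  tree : SimpleGraph ι
  isTree : tree.IsTree
  bag : ι → Finset V
  covers : ∀ v : V, ∃ x, v ∈ bag x
  coversEdge : ∀ ⦃u v : V⦄, G.Adj u v → ∃ x, u ∈ bag x ∧ v ∈ bag x
  bagConn : ∀ v : V, (tree.induce {x | v ∈ bag x}).Connected

/-- `G` has a tree decomposition of width at most `k` (bags of size at most `k+1`). -/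
def TwLE {V : Type} (G : SimpleGraph V) (k : ℕ) : Prop :=
  ∃ D : TreeDecomp G, ∀ x, (D.bag x).card ≤ k + 1

/-- A path decomposition of a graph `G`: a sequence of bags. -/
structure PathDecomp {V : Type} (G : SimpleGraph V) where
  n : ℕ
  bag : Fin n → Finset V
  covers : ∀ v : V, ∃ i, v ∈ bag i
  coversEdge : ∀ ⦃u v : V⦄, G.Adj u v → ∃ i, u ∈ bag i ∧ v ∈ bag i
  consecutive : ∀ (v : V) (i j k : Fin n), i ≤ j → j ≤ k → v ∈ bag i → v ∈ bag k → v ∈ bag j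

/-- `G` has a path decomposition of width at most `k` (bags of size at most `k+1`). -/
def PwLE {V : Type} (G : SimpleGraph V) (k : ℕ) : Prop :=
  ∃ P : PathDecomp G, ∀ i, (P.bag i).card ≤ k + 1

/-- A copy of a subdivision of the tree `T` inside the graph `G`:
branch vertices `φ x`, and for each edge of `T` a path of `G` between the
corresponding branch vertices, internally disjoint from all branch vertices
and from the paths of all other edges. -/
structure SubdivCopy {α V : Type} (T : SimpleGraph α) (G : SimpleGraph V) where
  φ : α → V
  inj : Function.Injective φ
  path : ∀ ⦃x y : α⦄, T.Adj x y → G.Walk (φ x) (φ y)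
  isPath : ∀ ⦃x y : α⦄ (h : T.Adj x y), (path h).IsPath
  branch : ∀ ⦃x y : α⦄ (h : T.Adj x y) (z : α), φ z ∈ (path h).support → z = x ∨ z = y
  disj : ∀ ⦃x y x' y' : α⦄ (h : T.Adj x y) (h' : T.Adj x' y'),
    ({x, y} : Set α) ≠ {x', y'} →
    ∀ v, v ∈ (path h).support → v ∈ (path h').support →
      v ∈ φ '' (({x, y} : Set α) ∩ {x', y'})

/-- The set of vertices used by a subdivision copy. -/
def SubdivCopy.supp {α V : Type} {T : SimpleGraph α} {G : SimpleGraph V}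
    (c : SubdivCopy T G) : Set V :=
  Set.range c.φ ∪ {v | ∃ x y, ∃ h : T.Adj x y, v ∈ (c.path h).support}

/-- `G` contains a subdivision of `T` as a subgraph. -/
def ContainsSubdiv {α V : Type} (T : SimpleGraph α) (G : SimpleGraph V) : Prop :=
  Nonempty (SubdivCopy T G)

/-- `S` is (isomorphic to) a subdivision of `T`: a subdivision copy of `T`
using all vertices and all edges of `S`. -/
def IsSubdivisionOf {α W : Type} (T : SimpleGraph α) (S : SimpleGraph W) : Prop :=
  ∃ c : SubdivCopy T S, c.supp = Set.univ ∧
    ∀ ⦃u w : W⦄, S.Adj u w → ∃ x y, ∃ h : T.Adj x y, s(u, w) ∈ (c.path h).edges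

/-- The complete binary tree of height `h`, as a simple graph: vertices are
binary strings of length at most `h`, with edges between a string and its
one-letter extensions. -/
def CBT (h : ℕ) : SimpleGraph {l : List Bool // l.length ≤ h} :=
  SimpleGraph.fromRel (fun x y => ∃ b, y.val = b :: x.val)

/-- The root of the complete binary tree. -/
def CBTroot (h : ℕ) : {l : List Bool // l.length ≤ h} := ⟨[], by simp⟩

/-- The complete ternary tree of height `h`, as a simple graph. -/
def CTT (h : ℕ) : SimpleGraph {l : List (Fin 3) // l.length ≤ h} :=
  SimpleGraph.fromRel (fun x y => ∃ b, y.val = b :: x.val)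

/-- The root of the complete ternary tree. -/
def CTTroot (h : ℕ) : {l : List (Fin 3) // l.length ≤ h} := ⟨[], by simp⟩

/-- There are `a ∈ A` and `b ∈ B` joined by a walk of `G` avoiding `C`. -/
def LinkedAvoiding {V : Type} (G : SimpleGraph V) (A B C : Set V) : Prop :=
  ∃ a ∈ A, ∃ b ∈ B, ∃ p : G.Walk a b, ∀ x ∈ p.support, x ∉ C

/-- The classes `𝒯_h`: `InT 0 G` iff `G` is connected (hence non-empty);
`InT (h+1) G` iff `G` is connected and has three pairwise disjoint vertex sets
inducing graphs in `𝒯_h`, any two of which are linked by a path avoiding the third. -/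
def InTAux : ℕ → (V : Type) → SimpleGraph V → Prop
  | 0, _, G => G.Connected
  | h + 1, V, G => G.Connected ∧ ∃ V₁ V₂ V₃ : Set V,
      Disjoint V₁ V₂ ∧ Disjoint V₁ V₃ ∧ Disjoint V₂ V₃ ∧
      InTAux h V₁ (G.induce V₁) ∧ InTAux h V₂ (G.induce V₂) ∧ InTAux h V₃ (G.induce V₃) ∧
      LinkedAvoiding G V₁ V₂ V₃ ∧ LinkedAvoiding G V₁ V₃ V₂ ∧ LinkedAvoiding G V₂ V₃ V₁

def InT (h : ℕ) {V : Type} (G : SimpleGraph V) : Prop := InTAux h V G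

/-!
We prove the stronger claim that every path decomposition has a bag containing `(h + 1) / 2 + 1`
vertices of the subdivided tree, by induction on `h` in steps of two. A subdivision of the tree
of height `h + 2` contains three vertex-disjoint subdivided subtrees, of heights `h`, `h` and
`h + 1` (rooted at the two grandchildren on one side and at the child on the other side), any two
of which are joined through the rest of the tree while avoiding the third. Pick for each of them a
bag meeting it in `(h + 1) / 2 + 1` vertices. The middle one of these three bags also meets the
walk joining the other two subtrees, which contributes one more vertex outside its own subtree.
-/

open Finset

variable {V : Type} {G : SimpleGraph V}

def LinkedWithinAvoiding (G : SimpleGraph V) (T A B C : Set V) : Prop :=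
  ∀ u ∈ A, ∀ w ∈ B, ∃ p : G.Walk u w, ∀ x ∈ p.support, x ∈ T \ C

namespace PathDecomp

open Classical in
def BagMeets (P : PathDecomp G) (S : Set V) (r : ℕ) : Prop :=
  ∃ j, r ≤ #{v ∈ P.bag j | v ∈ S}

theorem BagMeets.mono {P : PathDecomp G} {S S' : Set V} {r r' : ℕ} (hS : S ⊆ S') (hr : r' ≤ r)
    (hP : P.BagMeets S r) : P.BagMeets S' r' := by
  classical
  obtain ⟨j, hj⟩ := hP
  exact ⟨j, hr.trans (hj.trans (card_le_card (monotone_filter_right _ fun _ _ hx => hS hx)))⟩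

variable (P : PathDecomp G)

theorem bagMeets_one {S : Set V} {v : V} (hv : v ∈ S) : P.BagMeets S 1 := by
  classical
  obtain ⟨j, hj⟩ := P.covers v
  exact ⟨j, card_pos.mpr ⟨v, mem_filter.mpr ⟨hj, hv⟩⟩⟩

theorem bagMeets_two {S : Set V} {u v : V} (huv : G.Adj u v) (hu : u ∈ S) (hv : v ∈ S) :
    P.BagMeets S 2 := by
  classical
  obtain ⟨j, huj, hvj⟩ := P.coversEdge huv
  exact ⟨j, one_lt_card.mpr
    ⟨u, mem_filter.mpr ⟨huj, hu⟩, v, mem_filter.mpr ⟨hvj, hv⟩, huv.ne⟩⟩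

theorem mem_bag_of_mem_uIcc {v : V} {i j k : Fin P.n} (hi : v ∈ P.bag i) (hk : v ∈ P.bag k)
    (hj : j ∈ Set.uIcc i k) : v ∈ P.bag j := by
  rcases Set.mem_uIcc.mp hj with ⟨hij, hjk⟩ | ⟨hkj, hji⟩
  · exact P.consecutive v i j k hij hjk hi hk
  · exact P.consecutive v k j i hkj hji hk hi

theorem exists_mem_support_mem_bag {u w : V} (p : G.Walk u w) {i j k : Fin P.n}
    (hu : u ∈ P.bag i) (hw : w ∈ P.bag k) (hj : j ∈ Set.uIcc i k) :
    ∃ v ∈ p.support, v ∈ P.bag j := by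
  induction p generalizing i with
  | nil => exact ⟨_, List.mem_singleton_self _, P.mem_bag_of_mem_uIcc hu hw hj⟩
  | @cons u x w hux p ih =>
    obtain ⟨i', hui', hxi'⟩ := P.coversEdge hux
    by_cases hj' : j ∈ Set.uIcc i i'
    · exact ⟨u, p.support.mem_cons_self, P.mem_bag_of_mem_uIcc hu hui' hj'⟩
    · have : j ∈ Set.uIcc i' k := by simp only [Set.mem_uIcc] at hj hj' ⊢; omega
      obtain ⟨v, hvp, hvj⟩ := ih hxi' hw this
      exact ⟨v, List.mem_cons_of_mem _ hvp, hvj⟩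

open Classical in
theorem succ_le_card_of_mem_uIcc {T A B C : Set V} {r : ℕ} (hBT : B ⊆ T)
    (hlink : LinkedWithinAvoiding G T A C B) {i j k : Fin P.n} (hj : j ∈ Set.uIcc i k)
    {u w : V} (hu : u ∈ P.bag i) (huA : u ∈ A) (hw : w ∈ P.bag k) (hwC : w ∈ C)
    (hB : r ≤ #{v ∈ P.bag j | v ∈ B}) : r + 1 ≤ #{v ∈ P.bag j | v ∈ T} := by
  obtain ⟨p, hp⟩ := hlink u huA w hwC
  obtain ⟨v, hvp, hvj⟩ := P.exists_mem_support_mem_bag p hu hw hj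
  obtain ⟨hvT, hvB⟩ := hp v hvp
  calc r + 1 ≤ #{x ∈ P.bag j | x ∈ B} + 1 := Nat.add_le_add_right hB 1
    _ = #(insert v {x ∈ P.bag j | x ∈ B}) :=
        (card_insert_of_notMem fun h => hvB (mem_filter.mp h).2).symm
    _ ≤ #{x ∈ P.bag j | x ∈ T} :=
        card_le_card <| insert_subset (mem_filter.mpr ⟨hvj, hvT⟩)
          (monotone_filter_right _ fun _ _ hx => hBT hx)

theorem bagMeets_add_two {T A₁ A₂ A₃ : Set V} {r : ℕ} (h₁ : A₁ ⊆ T) (h₂ : A₂ ⊆ T)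
    (h₃ : A₃ ⊆ T) (L₁₂ : LinkedWithinAvoiding G T A₁ A₂ A₃)
    (L₁₃ : LinkedWithinAvoiding G T A₁ A₃ A₂) (L₂₃ : LinkedWithinAvoiding G T A₂ A₃ A₁)
    (m₁ : P.BagMeets A₁ (r + 1)) (m₂ : P.BagMeets A₂ (r + 1)) (m₃ : P.BagMeets A₃ (r + 1)) :
    P.BagMeets T (r + 2) := by
  classical
  have pick {j : Fin P.n} {S : Set V} (hj : r + 1 ≤ #{v ∈ P.bag j | v ∈ S}) :
      ∃ u ∈ P.bag j, u ∈ S := by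
    obtain ⟨u, hu⟩ := card_pos.mp (Nat.succ_pos r |>.trans_le hj)
    exact ⟨u, (mem_filter.mp hu).1, (mem_filter.mp hu).2⟩
  obtain ⟨j₁, hj₁⟩ := m₁
  obtain ⟨j₂, hj₂⟩ := m₂
  obtain ⟨j₃, hj₃⟩ := m₃
  obtain ⟨u₁, hu₁, hu₁A⟩ := pick hj₁
  obtain ⟨u₂, hu₂, hu₂A⟩ := pick hj₂
  obtain ⟨u₃, hu₃, hu₃A⟩ := pick hj₃
  have median : j₂ ∈ Set.uIcc j₁ j₃ ∨ j₁ ∈ Set.uIcc j₂ j₃ ∨ j₃ ∈ Set.uIcc j₁ j₂ := by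
    simp only [Set.mem_uIcc]
    omega
  rcases median with h | h | h
  · exact ⟨j₂, P.succ_le_card_of_mem_uIcc h₂ L₁₃ h hu₁ hu₁A hu₃ hu₃A hj₂⟩
  · exact ⟨j₁, P.succ_le_card_of_mem_uIcc h₁ L₂₃ h hu₂ hu₂A hu₃ hu₃A hj₁⟩
  · exact ⟨j₃, P.succ_le_card_of_mem_uIcc h₃ L₁₂ h hu₁ hu₁A hu₂ hu₂A hj₃⟩

end PathDecomp

namespace SubdivCopy

variable {α β : Type} {T : SimpleGraph α} (c : SubdivCopy T G)

def refl (G : SimpleGraph V) : SubdivCopy G G where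
  φ := id
  inj := Function.injective_id
  path _ _ h := h.toWalk
  isPath _ _ h := by simp [Walk.isPath_def, h.ne]
  branch _ _ _ z hz := by simpa using hz
  disj _ _ _ _ _ _ _ v hv hv' := by
    simp only [Adj.toWalk, Walk.support_cons, Walk.support_nil, List.mem_cons,
      List.not_mem_nil, or_false] at hv hv'
    refine ⟨v, ⟨?_, ?_⟩, rfl⟩ <;> aesop

def comap {T' : SimpleGraph β} (f : T' →g T) (hf : Function.Injective f) : SubdivCopy T' G where
  φ := c.φ ∘ f
  inj := c.inj.comp hf
  path _ _ h := c.path (f.map_adj h)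
  isPath _ _ h := c.isPath (f.map_adj h)
  branch _ _ h z hz := (c.branch (f.map_adj h) (f z) hz).imp (@hf _ _) (@hf _ _)
  disj x y x' y' h h' hne v hv hv' := by
    have hne' : ({f x, f y} : Set α) ≠ {f x', f y'} := by
      rw [← Set.image_pair, ← Set.image_pair]
      exact fun he => hne (Set.image_injective.mpr hf he)
    obtain ⟨w, hw, rfl⟩ := c.disj (f.map_adj h) (f.map_adj h') hne' v hv hv'
    rw [← Set.image_pair, ← Set.image_pair, ← Set.image_inter hf] at hw
    obtain ⟨z, hz, rfl⟩ := hw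
    exact ⟨z, hz, rfl⟩

def suppOn (B : Set α) : Set V :=
  c.φ '' B ∪ {v | ∃ x y, ∃ h : T.Adj x y, x ∈ B ∧ y ∈ B ∧ v ∈ (c.path h).support}

theorem suppOn_subset_supp (B : Set α) : c.suppOn B ⊆ c.supp := by
  rintro v (⟨x, -, rfl⟩ | ⟨x, y, h, -, -, hv⟩)
  exacts [Or.inl ⟨x, rfl⟩, Or.inr ⟨x, y, h, hv⟩]

theorem φ_mem_suppOn_iff {B : Set α} {x : α} : c.φ x ∈ c.suppOn B ↔ x ∈ B := by
  refine ⟨?_, fun hx => Or.inl ⟨x, hx, rfl⟩⟩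
  rintro (⟨z, hz, hzx⟩ | ⟨x', y', h, hx', hy', hx⟩)
  · exact c.inj hzx ▸ hz
  · rcases c.branch h x hx with rfl | rfl
    exacts [hx', hy']

theorem mem_or_mem_of_mem_suppOn {B : Set α} {x y : α} {h : T.Adj x y} {v : V}
    (hv : v ∈ (c.path h).support) (hvB : v ∈ c.suppOn B) : x ∈ B ∨ y ∈ B := by
  rcases hvB with ⟨z, hz, rfl⟩ | ⟨x', y', h', hx', hy', hv'⟩
  · rcases c.branch h z hv with rfl | rfl
    exacts [Or.inl hz, Or.inr hz]
  · by_cases hxy : ({x, y} : Set α) = {x', y'}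
    · exact Or.inl (Set.pair_subset hx' hy' (hxy ▸ Set.mem_insert x {y}))
    · obtain ⟨w, ⟨hw, hw'⟩, -⟩ := c.disj h h' hxy v hv hv'
      rcases hw with rfl | rfl
      exacts [Or.inl (Set.pair_subset hx' hy' hw'), Or.inr (Set.pair_subset hx' hy' hw')]

theorem disjoint_suppOn {B B' : Set α} (hB : Disjoint B B') :
    Disjoint (c.suppOn B) (c.suppOn B') := by
  rw [Set.disjoint_left]
  rintro v (⟨z, hz, rfl⟩ | ⟨x, y, h, hx, hy, hv⟩) hv'
  · exact Set.disjoint_left.mp hB hz (c.φ_mem_suppOn_iff.mp hv')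
  · rcases c.mem_or_mem_of_mem_suppOn hv hv' with h' | h'
    exacts [Set.disjoint_left.mp hB hx h', Set.disjoint_left.mp hB hy h']

theorem comap_supp_subset_suppOn {T' : SimpleGraph β} (f : T' →g T) (hf : Function.Injective f)
    {B : Set α} (hfB : ∀ x, f x ∈ B) : (c.comap f hf).supp ⊆ c.suppOn B := by
  rintro v (⟨z, rfl⟩ | ⟨x, y, h, hv⟩)
  exacts [Or.inl ⟨f z, hfB z, rfl⟩, Or.inr ⟨f x, f y, f.map_adj h, hfB x, hfB y, hv⟩]

def mapWalk : ∀ {x y : α}, T.Walk x y → G.Walk (c.φ x) (c.φ y)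
  | _, _, .nil => .nil
  | _, _, .cons h p => (c.path h).append (mapWalk p)

theorem mem_support_mapWalk {x y : α} (p : T.Walk x y) {v : V}
    (hv : v ∈ (c.mapWalk p).support) : v = c.φ y ∨
      ∃ a b, ∃ h : T.Adj a b, a ∈ p.support ∧ b ∈ p.support ∧ v ∈ (c.path h).support := by
  induction p with
  | nil => exact Or.inl (by simpa [mapWalk] using hv)
  | cons h p ih =>
    rcases (Walk.mem_support_append_iff _ _).mp hv with hv | hv
    · exact Or.inr ⟨_, _, h, by simp, by simp, hv⟩
    · rcases ih hv with hv | ⟨a, b, h', ha, hb, hv⟩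
      exacts [Or.inl hv, Or.inr ⟨a, b, h', by simp [ha], by simp [hb], hv⟩]

theorem support_mapWalk_subset_suppOn {B : Set α} {x y : α} (p : T.Walk x y)
    (hp : ∀ z ∈ p.support, z ∈ B) : ∀ v ∈ (c.mapWalk p).support, v ∈ c.suppOn B := by
  intro v hv
  rcases c.mem_support_mapWalk p hv with rfl | ⟨a, b, h, ha, hb, hv⟩
  · exact c.φ_mem_suppOn_iff.mpr (hp _ p.end_mem_support)
  · exact Or.inr ⟨a, b, h, hp a ha, hp b hb, hv⟩

theorem notMem_suppOn_of_mem_support_mapWalk {B : Set α} {x y : α} (p : T.Walk x y)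
    (hp : ∀ z ∈ p.support, z ∉ B) {v : V} (hv : v ∈ (c.mapWalk p).support) :
    v ∉ c.suppOn B := by
  rcases c.mem_support_mapWalk p hv with rfl | ⟨a, b, h, ha, hb, hv⟩
  · exact fun hy => hp _ p.end_mem_support (c.φ_mem_suppOn_iff.mp hy)
  · exact fun hvB => (c.mem_or_mem_of_mem_suppOn hv hvB).elim (hp a ha) (hp b hb)

theorem exists_walk_of_mem_suppOn {B : Set α} {r : α}
    (hB : ∀ z ∈ B, ∃ p : T.Walk z r, ∀ w ∈ p.support, w ∈ B) {v : V} (hv : v ∈ c.suppOn B) :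
    ∃ q : G.Walk v (c.φ r), ∀ w ∈ q.support, w ∈ c.suppOn B := by
  classical
  rcases hv with ⟨z, hz, rfl⟩ | ⟨x, y, h, hx, hy, hv⟩
  · obtain ⟨p, hp⟩ := hB z hz
    exact ⟨c.mapWalk p, c.support_mapWalk_subset_suppOn p hp⟩
  · obtain ⟨p, hp⟩ := hB x hx
    refine ⟨((c.path h).takeUntil v hv).reverse.append (c.mapWalk p), fun w hw => ?_⟩
    rcases (Walk.mem_support_append_iff _ _).mp hw with hw | hw
    · refine Or.inr ⟨x, y, h, hx, hy, Walk.support_takeUntil_subset_support _ hv ?_⟩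
      simpa using hw
    · exact c.support_mapWalk_subset_suppOn p hp w hw

theorem linkedWithinAvoiding_suppOn {Ba Bb Bt : Set α} {ra rb : α}
    (hBa : ∀ z ∈ Ba, ∃ p : T.Walk z ra, ∀ w ∈ p.support, w ∈ Ba)
    (hBb : ∀ z ∈ Bb, ∃ p : T.Walk z rb, ∀ w ∈ p.support, w ∈ Bb)
    (hat : Disjoint Ba Bt) (hbt : Disjoint Bb Bt)
    (trunk : T.Walk ra rb) (htrunk : ∀ z ∈ trunk.support, z ∉ Bt) :
    LinkedWithinAvoiding G c.supp (c.suppOn Ba) (c.suppOn Bb) (c.suppOn Bt) := by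
  intro u hu w hw
  obtain ⟨qa, hqa⟩ := c.exists_walk_of_mem_suppOn hBa hu
  obtain ⟨qb, hqb⟩ := c.exists_walk_of_mem_suppOn hBb hw
  have inside {B : Set α} (hB : Disjoint B Bt) {x : V} (hx : x ∈ c.suppOn B) :
      x ∈ c.supp \ c.suppOn Bt :=
    ⟨c.suppOn_subset_supp B hx, Set.disjoint_left.mp (c.disjoint_suppOn hB) hx⟩
  refine ⟨qa.append ((c.mapWalk trunk).append qb.reverse), fun x hx => ?_⟩
  simp only [Walk.mem_support_append_iff, Walk.support_reverse, List.mem_reverse] at hx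
  rcases hx with hx | hx | hx
  · exact inside hat (hqa x hx)
  · exact ⟨c.suppOn_subset_supp Set.univ
      (c.support_mapWalk_subset_suppOn trunk (fun _ _ => trivial) x hx),
      c.notMem_suppOn_of_mem_support_mapWalk trunk htrunk hx⟩
  · exact inside hbt (hqb x hx)

theorem bagMeets_supp_two (P : PathDecomp G) {x y : α} (h : T.Adj x y) :
    P.BagMeets c.supp 2 := by
  have hnil : ¬ (c.path h).Nil := fun hn => h.ne (c.inj hn.eq)
  exact P.bagMeets_two (Walk.adj_snd hnil) (Or.inl ⟨x, rfl⟩)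
    (Or.inr ⟨x, y, h, (c.path h).getVert_mem_support 1⟩)

end SubdivCopy

abbrev CBTNode (h : ℕ) := {l : List Bool // l.length ≤ h}

namespace CBT

variable {h : ℕ}

theorem adj_cons (b : Bool) {l : List Bool} (hl : (b :: l).length ≤ h) :
    (CBT h).Adj ⟨l, (Nat.le_succ _).trans hl⟩ ⟨b :: l, hl⟩ := by
  rw [CBT, fromRel_adj]
  refine ⟨fun he => ?_, Or.inl ⟨b, rfl⟩⟩
  simpa using congrArg (fun x => x.val.length) he

theorem exists_walk_of_suffix {x y : CBTNode h} (hyx : y.val <:+ x.val) :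
    ∃ p : (CBT h).Walk x y, ∀ z ∈ p.support, y.val <:+ z.val ∧ z.val <:+ x.val := by
  obtain ⟨d, hd⟩ := hyx
  induction d generalizing x with
  | nil =>
    obtain rfl : x = y := Subtype.ext hd.symm
    exact ⟨.nil, by simp⟩
  | cons b d ih =>
    obtain ⟨x, hx⟩ := x
    subst hd
    obtain ⟨p, hp⟩ := ih (x := ⟨d ++ y.val, (Nat.le_succ _).trans hx⟩) rfl
    refine ⟨.cons (adj_cons b hx).symm p, ?_⟩
    simp only [Walk.support_cons, List.mem_cons, forall_eq_or_imp]
    refine ⟨⟨List.suffix_append _ _, List.suffix_refl _⟩, fun z hz => ?_⟩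
    exact ⟨(hp z hz).1, (hp z hz).2.trans (List.suffix_cons _ _)⟩

/-- Nodes grow at the head of the list, so the subtree rooted at `s` consists of the nodes
having `s` as a suffix. -/
def subtree (h : ℕ) (s : List Bool) : Set (CBTNode h) := {z | s <:+ z.val}

theorem mem_subtree {s : List Bool} {z : CBTNode h} : z ∈ subtree h s ↔ s <:+ z.val := Iff.rfl

theorem disjoint_subtree {s t : List Bool} (hst : ¬ s <:+ t) (hts : ¬ t <:+ s) :
    Disjoint (subtree h s) (subtree h t) :=
  Set.disjoint_left.mpr fun _ hs ht => (List.suffix_or_suffix_of_suffix hs ht).elim hst hts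

def extend {h' : ℕ} (s : List Bool) (hs : s.length + h' ≤ h) : CBT h' →g CBT h where
  toFun x := ⟨x.val ++ s, by simp only [List.length_append]; omega⟩
  map_rel' {x y} hxy := by
    rw [CBT, fromRel_adj] at hxy ⊢
    obtain ⟨hne, hb⟩ := hxy
    refine ⟨fun he => hne (Subtype.ext (List.append_cancel_right (congrArg Subtype.val he))), ?_⟩
    rcases hb with ⟨b, hb⟩ | ⟨b, hb⟩
    exacts [Or.inl ⟨b, by simp [hb]⟩, Or.inr ⟨b, by simp [hb]⟩]

theorem extend_injective {h' : ℕ} (s : List Bool) (hs : s.length + h' ≤ h) :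
    Function.Injective (extend s hs) :=
  fun _ _ he => Subtype.ext (List.append_cancel_right (congrArg Subtype.val he))

theorem extend_mem_subtree {h' : ℕ} (s : List Bool) (hs : s.length + h' ≤ h) (x : CBTNode h') :
    extend s hs x ∈ subtree h s :=
  List.suffix_append _ _

end CBT

namespace SubdivCopy

open CBT

variable {h : ℕ} (c : SubdivCopy (CBT h) G)

def restrict {h' : ℕ} (s : List Bool) (hs : s.length + h' ≤ h) : SubdivCopy (CBT h') G :=
  c.comap (extend s hs) (extend_injective s hs)

theorem restrict_supp_subset {h' : ℕ} (s : List Bool) (hs : s.length + h' ≤ h) :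
    (c.restrict s hs).supp ⊆ c.suppOn (subtree h s) :=
  c.comap_supp_subset_suppOn _ _ (extend_mem_subtree s hs)

theorem linkedWithinAvoiding_subtree {a b t : List Bool} (ha : a.length ≤ h) (hb : b.length ≤ h)
    (hat : ¬ a <:+ t ∧ ¬ t <:+ a) (hbt : ¬ b <:+ t ∧ ¬ t <:+ b) :
    LinkedWithinAvoiding G c.supp (c.suppOn (subtree h a)) (c.suppOn (subtree h b))
      (c.suppOn (subtree h t)) := by
  have toSubtreeRoot (r : CBTNode h) :
      ∀ z ∈ subtree h r.val, ∃ p : (CBT h).Walk z r, ∀ w ∈ p.support, w ∈ subtree h r.val :=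
    fun _ hz => (exists_walk_of_suffix hz).imp fun _ hp w hw => (hp w hw).1
  obtain ⟨pa, hpa⟩ := exists_walk_of_suffix (x := ⟨a, ha⟩) (y := CBTroot h) List.nil_suffix
  obtain ⟨pb, hpb⟩ := exists_walk_of_suffix (x := ⟨b, hb⟩) (y := CBTroot h) List.nil_suffix
  refine c.linkedWithinAvoiding_suppOn (toSubtreeRoot ⟨a, ha⟩) (toSubtreeRoot ⟨b, hb⟩)
    (disjoint_subtree hat.1 hat.2) (disjoint_subtree hbt.1 hbt.2) (pa.append pb.reverse)
    fun z hz hzt => ?_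
  simp only [Walk.mem_support_append_iff, Walk.support_reverse, List.mem_reverse] at hz
  rcases hz with hz | hz
  exacts [hat.2 ((mem_subtree.mp hzt).trans (hpa z hz).2),
    hbt.2 ((mem_subtree.mp hzt).trans (hpb z hz).2)]

end SubdivCopy

theorem SubdivCopy.bagMeets_supp (P : PathDecomp G) :
    ∀ {h : ℕ} (c : SubdivCopy (CBT h) G), P.BagMeets c.supp ((h + 1) / 2 + 1)
  | 0, c => P.bagMeets_one (Or.inl ⟨CBTroot 0, rfl⟩)
  | 1, c => c.bagMeets_supp_two P (CBT.adj_cons false (l := []) le_rfl)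
  | n + 2, c => by
    have m₁ := (bagMeets_supp P (c.restrict (h' := n) [false, false] (by simp +arith))).mono
      (c.restrict_supp_subset _ _) le_rfl
    have m₂ := (bagMeets_supp P (c.restrict (h' := n) [true, false] (by simp +arith))).mono
      (c.restrict_supp_subset _ _) le_rfl
    have m₃ := (bagMeets_supp P (c.restrict (h' := n + 1) [true] (by simp +arith))).mono
      (c.restrict_supp_subset _ _) (show (n + 1) / 2 + 1 ≤ (n + 1 + 1) / 2 + 1 by omega)
    have hsub (s) := c.suppOn_subset_supp (CBT.subtree (n + 2) s)
    refine (P.bagMeets_add_two (hsub _) (hsub _) (hsub _)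
      (c.linkedWithinAvoiding_subtree (t := [true]) (by simp) (by simp) (by decide) (by decide))
      (c.linkedWithinAvoiding_subtree (t := [true, false]) (by simp) (by simp) (by decide)
        (by decide))
      (c.linkedWithinAvoiding_subtree (t := [false, false]) (by simp) (by simp) (by decide)
        (by decide)) m₁ m₂ m₃).mono subset_rfl (by omega)

theorem ContainsSubdiv.half_height_le {h k : ℕ} (hc : ContainsSubdiv (CBT h) G) (hk : PwLE G k) :
    (h + 1) / 2 ≤ k := by
  classical
  obtain ⟨c⟩ := hc
  obtain ⟨P, hP⟩ := hk
  obtain ⟨j, hj⟩ := c.bagMeets_supp P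
  exact Nat.le_of_succ_le_succ (hj.trans ((card_filter_le _ _).trans (hP j)))

theorem stmt11 (h : ℕ) :
    (∀ k, PwLE (CBT h) k → (h + 1) / 2 ≤ k) ∧
    (∀ (W : Type) (S : SimpleGraph W), IsSubdivisionOf (CBT h) S →
      ∀ k, PwLE S k → (h + 1) / 2 ≤ k) :=
  ⟨fun _ => ContainsSubdiv.half_height_le ⟨SubdivCopy.refl _⟩,
    fun _ _ ⟨c, _⟩ _ => ContainsSubdiv.half_height_le ⟨c⟩⟩
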